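/- arXiv:1405.2323 — 3 statements merged into one kernel-verified Lean document; each statement's English description precedes it below -/
import Mathlib

section
/- Fix distinct points ζ₁,…,ζ_n on the unit circle and positive integers m₁,…,m_n with N = m₁ + ⋯ + m_n. For 1 ≤ j ≤ n and 0 ≤ ℓ ≤ m_j − 1 define the polynomial φ_{j,ℓ}(z) = z^ℓ (z − ζ_j)^{m_j − (ℓ+1)} ∏_{k≠j} (z − ζ_k)^{m_k}. Then the family {φ_{j,ℓ}} is linearly independent, and hence is a basis of the space of polynomials of degree at most N − 1. -/
open Polynomial Finset

lemma aux_indep (ζ : ℂ) (hζ : ζ ≠ 0) : ∀ (M : ℕ) (c : Fin M → ℂ),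
    ∑ ℓ : Fin M, c ℓ • ((X : ℂ[X]) ^ (ℓ : ℕ) * (X - C ζ) ^ (M - ((ℓ : ℕ) + 1))) = 0 →
    ∀ ℓ, c ℓ = 0 := by
  intro M
  induction M with
  | zero => intro c _ ℓ; exact ℓ.elim0
  | succ M ih =>
    intro c h
    have hlast : c (Fin.last M) = 0 := by
      have h2 := congrArg (Polynomial.eval ζ) h
      rw [Polynomial.eval_finset_sum, Fin.sum_univ_castSucc] at h2
      simp only [Fin.coe_castSucc, Fin.val_last, eval_smul, eval_mul, eval_pow, eval_sub,
        eval_X, eval_C, sub_self, smul_eq_mul, eval_zero] at h2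
      have : ∀ ℓ : Fin M, c ℓ.castSucc * (ζ ^ (ℓ : ℕ) * (0:ℂ) ^ (M + 1 - ((ℓ : ℕ) + 1))) = 0 := by
        intro ℓ
        have : M + 1 - ((ℓ : ℕ) + 1) = M - ℓ := by omega
        rw [this, zero_pow (by omega : M - (ℓ:ℕ) ≠ 0)]
        ring
      rw [Finset.sum_eq_zero (fun ℓ _ => this ℓ)] at h2
      have hMl : M + 1 - (M + 1) = 0 := by omega
      rw [hMl] at h2
      simp at h2
      tauto
    rw [Fin.sum_univ_castSucc] at h
    have hfac : ∀ ℓ : Fin M,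
        c ℓ.castSucc • ((X : ℂ[X]) ^ (ℓ.castSucc : ℕ) * (X - C ζ) ^ (M + 1 - ((ℓ.castSucc : ℕ) + 1)))
        = (X - C ζ) * (c ℓ.castSucc • ((X : ℂ[X]) ^ (ℓ : ℕ) * (X - C ζ) ^ (M - ((ℓ : ℕ) + 1)))) := by
      intro ℓ
      have he : M + 1 - ((ℓ.castSucc : ℕ) + 1) = (M - ((ℓ : ℕ) + 1)) + 1 := by
        have := ℓ.isLt; simp only [Fin.coe_castSucc]; omega
      rw [he, pow_succ]
      simp only [Fin.coe_castSucc]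
      simp only [Polynomial.smul_eq_C_mul]
      ring
    rw [Finset.sum_congr rfl (fun ℓ _ => hfac ℓ)] at h
    rw [hlast, zero_smul, add_zero, ← Finset.mul_sum] at h
    have hX : (X : ℂ[X]) - C ζ ≠ 0 := X_sub_C_ne_zero ζ
    have h0 := (mul_eq_zero.mp h).resolve_left hX
    have := ih (fun ℓ => c ℓ.castSucc) h0
    intro ℓ
    refine Fin.lastCases ?_ ?_ ℓ
    · exact hlast
    · exact this

theorem stmt_7 (n : ℕ) (hn : 0 < n) (ζ : Fin n → ℂ)
    (hζ : ∀ j, ‖ζ j‖ = 1) (hdist : Function.Injective ζ)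
    (m : Fin n → ℕ) (hm : ∀ j, 0 < m j)
    (N : ℕ) (hN : N = ∑ j, m j)
    (φ : (Σ j : Fin n, Fin (m j)) → Polynomial ℂ)
    (hφ : ∀ p : Σ j : Fin n, Fin (m j),
      φ p = X ^ (p.2 : ℕ) * (X - C (ζ p.1)) ^ (m p.1 - ((p.2 : ℕ) + 1)) *
        ∏ k ∈ Finset.univ.erase p.1, (X - C (ζ k)) ^ (m k)) :
    LinearIndependent ℂ φ ∧
      Submodule.span ℂ (Set.range φ) = Polynomial.degreeLT ℂ N := by
  have hζ0 : ∀ j, ζ j ≠ 0 := by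
    intro j h
    have := hζ j; rw [h] at this; simp at this
  set Q : Fin n → ℂ[X] := fun j => ∏ k ∈ Finset.univ.erase j, (X - C (ζ k)) ^ (m k) with hQ
  have hQeval : ∀ j, (Q j).eval (ζ j) ≠ 0 := by
    intro j
    rw [hQ]
    simp only [eval_prod, eval_pow, eval_sub, eval_X, eval_C]
    rw [Finset.prod_ne_zero_iff]
    intro k hk
    apply pow_ne_zero
    intro h
    exact (Finset.mem_erase.mp hk).1 ((hdist (sub_eq_zero.mp h)).symm)
  -- linear independence
  have hli : LinearIndependent ℂ φ := by
    rw [Fintype.linearIndependent_iff]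
    intro c hc
    set g : Fin n → ℂ[X] := fun k =>
      ∑ ℓ : Fin (m k), c ⟨k, ℓ⟩ • ((X : ℂ[X]) ^ (ℓ : ℕ) * (X - C (ζ k)) ^ (m k - ((ℓ : ℕ) + 1)))
      with hg
    have hsum : ∑ k, g k * Q k = 0 := by
      rw [← hc, ← Finset.univ_sigma_univ, Finset.sum_sigma]
      refine Finset.sum_congr rfl (fun k _ => ?_)
      rw [hg, Finset.sum_mul]
      refine Finset.sum_congr rfl (fun ℓ _ => ?_)
      rw [hφ ⟨k, ℓ⟩, smul_mul_assoc]
    have hgj : ∀ j, g j = 0 := by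
      intro j
      have hdvd : ((X : ℂ[X]) - C (ζ j)) ^ (m j) ∣ g j * Q j := by
        rw [← Finset.add_sum_erase _ _ (Finset.mem_univ j)] at hsum
        have h1 : g j * Q j = -∑ k ∈ Finset.univ.erase j, g k * Q k :=
          eq_neg_of_add_eq_zero_left hsum
        rw [h1, dvd_neg]
        refine Finset.dvd_sum (fun k hk => ?_)
        have hjk : j ∈ Finset.univ.erase k :=
          Finset.mem_erase.mpr ⟨fun h => (Finset.mem_erase.mp hk).1 h.symm, Finset.mem_univ j⟩
        exact (Finset.dvd_prod_of_mem (fun i => ((X : ℂ[X]) - C (ζ i)) ^ (m i)) hjk).mul_left (g k)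
      have hndvd : ¬ ((X : ℂ[X]) - C (ζ j)) ∣ Q j := by
        rw [dvd_iff_isRoot]
        exact fun h => hQeval j h
      have hdvdg : ((X : ℂ[X]) - C (ζ j)) ^ (m j) ∣ g j :=
        (prime_X_sub_C (ζ j)).pow_dvd_of_dvd_mul_right _ hndvd hdvd
      by_contra hne
      have hdeg : (g j).degree < ((m j : ℕ) : WithBot ℕ) := by
        rw [hg]
        refine lt_of_le_of_lt (Polynomial.degree_sum_le _ _) ?_
        rw [Finset.sup_lt_iff (by exact_mod_cast WithBot.bot_lt_coe _)]
        intro ℓ _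
        refine lt_of_le_of_lt (Polynomial.degree_smul_le _ _) ?_
        refine lt_of_le_of_lt (Polynomial.degree_mul_le _ _) ?_
        have h1 : ((X : ℂ[X]) ^ (ℓ : ℕ)).degree = (ℓ : ℕ) := Polynomial.degree_X_pow _
        have h2 : (((X : ℂ[X]) - C (ζ j)) ^ (m j - ((ℓ : ℕ) + 1))).degree
            = (m j - ((ℓ : ℕ) + 1) : ℕ) := by
          rw [Polynomial.degree_pow, Polynomial.degree_X_sub_C]; simp
        rw [h1, h2]
        have := ℓ.isLt
        rw [← Nat.cast_add]
        exact_mod_cast (by omega : (ℓ : ℕ) + (m j - ((ℓ : ℕ) + 1)) < m j)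
      have := Polynomial.degree_le_of_dvd hdvdg hne
      rw [Polynomial.degree_pow, Polynomial.degree_X_sub_C] at this
      simp only [nsmul_eq_mul, mul_one] at this
      exact absurd (lt_of_le_of_lt this hdeg) (lt_irrefl _)
    intro p
    obtain ⟨j, ℓ⟩ := p
    exact aux_indep (ζ j) (hζ0 j) (m j) (fun ℓ => c ⟨j, ℓ⟩) (hgj j) ℓ
  -- membership
  have hmem : ∀ p, φ p ∈ Polynomial.degreeLT ℂ N := by
    intro p
    rw [Polynomial.mem_degreeLT, hφ p]
    refine lt_of_le_of_lt (Polynomial.degree_mul_le _ _) ?_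
    refine lt_of_le_of_lt (add_le_add (Polynomial.degree_mul_le _ _)
      (Polynomial.degree_prod_le _ _)) ?_
    have h1 : ((X : ℂ[X]) ^ (p.2 : ℕ)).degree = ((p.2 : ℕ) : WithBot ℕ) := degree_X_pow _
    have h2 : (((X : ℂ[X]) - C (ζ p.1)) ^ (m p.1 - ((p.2 : ℕ) + 1))).degree
        = ((m p.1 - ((p.2 : ℕ) + 1) : ℕ) : WithBot ℕ) := by
      rw [Polynomial.degree_pow, Polynomial.degree_X_sub_C]; simp
    have h3 : ∀ k ∈ Finset.univ.erase p.1, (((X : ℂ[X]) - C (ζ k)) ^ (m k)).degree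
        = ((m k : ℕ) : WithBot ℕ) := by
      intro k _; rw [Polynomial.degree_pow, Polynomial.degree_X_sub_C]; simp
    rw [h1, h2, Finset.sum_congr rfl h3]
    rw [← Nat.cast_add, ← Nat.cast_sum, ← Nat.cast_add]
    have hlt := p.2.isLt
    have : (p.2 : ℕ) + (m p.1 - ((p.2 : ℕ) + 1)) + ∑ k ∈ Finset.univ.erase p.1, m k < N := by
      have hsplit : ∑ k, m k = m p.1 + ∑ k ∈ Finset.univ.erase p.1, m k :=
        (Finset.add_sum_erase _ _ (Finset.mem_univ p.1)).symm
      omega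
    exact_mod_cast this
  refine ⟨hli, ?_⟩
  -- span
  have hcard : Fintype.card (Σ j : Fin n, Fin (m j)) = N := by
    simp [Fintype.card_sigma, hN]
  have hfr : Module.finrank ℂ (Polynomial.degreeLT ℂ N) = N := by
    rw [LinearEquiv.finrank_eq (Polynomial.degreeLTEquiv ℂ N)]
    simp
  set φ' : (Σ j : Fin n, Fin (m j)) → Polynomial.degreeLT ℂ N := fun p => ⟨φ p, hmem p⟩ with hφ'
  have hli' : LinearIndependent ℂ φ' := by
    apply LinearIndependent.of_comp (Polynomial.degreeLT ℂ N).subtype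
    exact hli
  have : Nonempty (Σ j : Fin n, Fin (m j)) := ⟨⟨⟨0, hn⟩, ⟨0, hm _⟩⟩⟩
  have hspan' : Submodule.span ℂ (Set.range φ') = ⊤ :=
    hli'.span_eq_top_of_card_eq_finrank (hcard.trans hfr.symm)
  have : Submodule.map (Polynomial.degreeLT ℂ N).subtype (Submodule.span ℂ (Set.range φ')) =
      Submodule.map (Polynomial.degreeLT ℂ N).subtype ⊤ := by rw [hspan']
  rw [Submodule.map_span, Submodule.map_top, Submodule.range_subtype] at this
  rw [← this, ← Set.range_comp]
  rfl
end

section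
/- Fix ζ₀ on the unit circle, a positive integer m, an integer ℓ with 0 ≤ ℓ ≤ m − 1, let a be analytic on a neighborhood of the closed unit disk with a zero of order at least m at ζ₀, and let g ∈ H². Then lim_{t → 1⁻} (a·g)^{(ℓ)}(t ζ₀) = 0. -/
open Metric Filter

/-!
Near the boundary point `ζ₀` the product `a * g` is small: `a` vanishes to order `m` at `ζ₀`,
while square-summability of the Taylor coefficients of `g` gives `|g z| ≲ (1 - |z|)^(-1/2)`
(weigh `|c_k| |z|^k` against `|z|^(2k)` by AM–GM with weight `√(1 - |z|)`). On the circle of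
radius `ρ = (1 - t) / 2` about `t ζ₀` this yields `|a g| ≲ ρ^(m - 1/2)`, and Cauchy's estimate
turns it into `|(a g)^(ℓ)(t ζ₀)| ≲ ρ^(m - ℓ - 1/2)`, which tends to `0` because `ℓ < m`.
-/

lemma mul_le_sq_div_add_mul_sq {a b v : ℝ} (ha : 0 ≤ a) (hb : 0 ≤ b) (hv : 0 < v) :
    a * b ≤ a ^ 2 / v + v * b ^ 2 := by
  rw [div_add' _ _ _ hv.ne', le_div_iff₀ hv]
  nlinarith [sq_nonneg (a - v * b), mul_nonneg (mul_nonneg ha hb) hv.le]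

section SquareSummable

variable {𝕜 : Type*} [NormedField 𝕜] {c : ℕ → 𝕜}

lemma norm_mul_pow_le_sq_div_add (k : ℕ) {r v : ℝ} (hr : 0 ≤ r) (hv : 0 < v) :
    ‖c k‖ * r ^ k ≤ ‖c k‖ ^ 2 / v + v * (r ^ 2) ^ k := by
  rw [pow_right_comm]
  exact mul_le_sq_div_add_mul_sq (norm_nonneg _) (pow_nonneg hr k) hv

theorem summable_norm_mul_pow_of_summable_sq (hc : Summable fun k => ‖c k‖ ^ 2) {r : ℝ}
    (hr0 : 0 ≤ r) (hr1 : r < 1) : Summable fun k => ‖c k‖ * r ^ k :=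
  .of_nonneg_of_le (fun k => by positivity) (fun k => norm_mul_pow_le_sq_div_add k hr0 one_pos)
    ((hc.div_const 1).add
      ((summable_geometric_of_lt_one (by positivity) (by nlinarith)).mul_left 1))

theorem norm_tsum_mul_pow_le (hc : Summable fun k => ‖c k‖ ^ 2) {z : 𝕜} (hz : ‖z‖ < 1) :
    ‖∑' k, c k * z ^ k‖ ≤ ((∑' k, ‖c k‖ ^ 2) + 1) / √(1 - ‖z‖) := by
  set r := ‖z‖
  have hr0 : 0 ≤ r := norm_nonneg z
  set v := √(1 - r)
  have hv : 0 < v := Real.sqrt_pos.2 (by linarith)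
  have hv2 : v ^ 2 = 1 - r := Real.sq_sqrt (by linarith)
  have hgeo : Summable fun k => (r ^ 2) ^ k :=
    summable_geometric_of_lt_one (by positivity) (by nlinarith)
  have hnorm : ∀ k, ‖c k * z ^ k‖ = ‖c k‖ * r ^ k := fun k => by rw [norm_mul, norm_pow]
  have hsumm : Summable fun k => ‖c k * z ^ k‖ := by
    simpa only [hnorm] using summable_norm_mul_pow_of_summable_sq hc hr0 hz
  calc ‖∑' k, c k * z ^ k‖ ≤ ∑' k, ‖c k * z ^ k‖ := norm_tsum_le_tsum_norm hsumm
    _ ≤ ∑' k, (‖c k‖ ^ 2 / v + v * (r ^ 2) ^ k) :=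
      hsumm.tsum_le_tsum (fun k => (hnorm k).trans_le (norm_mul_pow_le_sq_div_add k hr0 hv))
        ((hc.div_const v).add (hgeo.mul_left v))
    _ = (∑' k, ‖c k‖ ^ 2) / v + v * (1 - r ^ 2)⁻¹ := by
      rw [(hc.div_const v).tsum_add (hgeo.mul_left v), tsum_div_const, tsum_mul_left,
        tsum_geometric_of_lt_one (by positivity) (by nlinarith)]
    _ ≤ (∑' k, ‖c k‖ ^ 2) / v + v * (1 - r)⁻¹ := by gcongr; nlinarith
    _ = ((∑' k, ‖c k‖ ^ 2) + 1) / v := by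
      rw [← hv2]
      field_simp

end SquareSummable

theorem differentiableOn_tsum_mul_pow {c : ℕ → ℂ} (hc : Summable fun k => ‖c k‖ ^ 2) :
    DifferentiableOn ℂ (fun z => ∑' k, c k * z ^ k) (ball 0 1) := by
  intro x hx
  obtain ⟨r, hxr, hr1⟩ := exists_between (mem_ball_zero_iff.1 hx)
  have hr0 : 0 ≤ r := (norm_nonneg x).trans hxr.le
  have hdiff : DifferentiableOn ℂ (fun z => ∑' k, c k * z ^ k) (ball 0 r) :=
    Complex.differentiableOn_tsum_of_summable_norm
      (summable_norm_mul_pow_of_summable_sq hc hr0 hr1) (fun k => by fun_prop) isOpen_ball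
      fun k w hw => by
        rw [norm_mul, norm_pow]
        gcongr
        exact (mem_ball_zero_iff.1 hw).le
  exact (hdiff.differentiableAt
    (isOpen_ball.mem_nhds (mem_ball_zero_iff.2 hxr))).differentiableWithinAt

section RadialApproach

variable {ζ₀ z : ℂ} {t : ℝ}

lemma norm_le_of_mem_closedBall_ofReal_mul (hζ₀ : ‖ζ₀‖ = 1) (ht : 0 ≤ t)
    (hz : z ∈ closedBall (t * ζ₀) ((1 - t) / 2)) : ‖z‖ ≤ 1 - (1 - t) / 2 := by
  have hc : ‖(t : ℂ) * ζ₀‖ = t := by rw [norm_mul, hζ₀, Complex.norm_of_nonneg ht, mul_one]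
  have := norm_le_norm_add_norm_sub' z (t * ζ₀)
  rw [mem_closedBall, dist_eq_norm] at hz
  linarith

lemma norm_sub_le_of_mem_closedBall_ofReal_mul (hζ₀ : ‖ζ₀‖ = 1) (ht : t ≤ 1)
    (hz : z ∈ closedBall (t * ζ₀) ((1 - t) / 2)) : ‖z - ζ₀‖ ≤ 3 * ((1 - t) / 2) := by
  have hc : ‖(t : ℂ) * ζ₀ - ζ₀‖ = 1 - t := by
    rw [show (t : ℂ) * ζ₀ - ζ₀ = ((1 - t : ℝ) : ℂ) * -ζ₀ by push_cast; ring, norm_mul, norm_neg,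
      hζ₀, Complex.norm_of_nonneg (by linarith), mul_one]
  have := norm_sub_le_norm_sub_add_norm_sub z (t * ζ₀) ζ₀
  rw [mem_closedBall, dist_eq_norm] at hz
  linarith

theorem norm_iteratedDeriv_le_of_norm_le_mul_pow {f : ℂ → ℂ} (hζ₀ : ‖ζ₀‖ = 1) {m ℓ : ℕ}
    (hℓ : ℓ < m) {A : ℝ} (hA : 0 ≤ A) (hf : DifferentiableOn ℂ f (ball 0 1))
    (hbound : ∀ z ∈ ball (0 : ℂ) 1, ‖f z‖ ≤ A * ‖z - ζ₀‖ ^ m / √(1 - ‖z‖))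
    (ht0 : 0 ≤ t) (ht1 : t < 1) :
    ‖iteratedDeriv ℓ f (t * ζ₀)‖ ≤ ℓ.factorial * A * 3 ^ m * √((1 - t) / 2) := by
  set ρ := (1 - t) / 2 with hρ_def
  have hρ : 0 < ρ := by linarith
  have hball : closedBall ((t : ℂ) * ζ₀) ρ ⊆ ball 0 1 := fun z hz =>
    mem_ball_zero_iff.2 (by linarith [norm_le_of_mem_closedBall_ofReal_mul hζ₀ ht0 hz])
  have hsphere : ∀ z ∈ sphere ((t : ℂ) * ζ₀) ρ, ‖f z‖ ≤ A * (3 * ρ) ^ m / √ρ := by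
    intro z hz
    have hz := sphere_subset_closedBall hz
    refine (hbound z (hball hz)).trans ?_
    gcongr
    · exact norm_sub_le_of_mem_closedBall_ofReal_mul hζ₀ ht1.le hz
    · linarith [norm_le_of_mem_closedBall_ofReal_mul hζ₀ ht0 hz]
  have hsplit : ρ ^ m = ρ ^ ℓ * ρ ^ (m - ℓ - 1) * (√ρ * √ρ) := by
    rw [Real.mul_self_sqrt hρ.le, ← pow_add, ← pow_succ]
    congr 1
    omega
  calc ‖iteratedDeriv ℓ f (t * ζ₀)‖ ≤ ℓ.factorial * (A * (3 * ρ) ^ m / √ρ) / ρ ^ ℓ :=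
        Complex.norm_iteratedDeriv_le_of_forall_mem_sphere_norm_le ℓ hρ
          (hf.diffContOnCl_ball hball) hsphere
    _ = ℓ.factorial * A * 3 ^ m * (ρ ^ (m - ℓ - 1) * √ρ) := by
      rw [mul_pow, hsplit]
      field_simp
    _ ≤ ℓ.factorial * A * 3 ^ m * √ρ := by
      gcongr
      exact mul_le_of_le_one_left (Real.sqrt_nonneg _) (pow_le_one₀ hρ.le (by linarith))

end RadialApproach

theorem stmt_12_general (ζ₀ : ℂ) (hζ₀ : ‖ζ₀‖ = 1) (m : ℕ) (hm : 0 < m)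
    (ℓ : ℕ) (hℓ : ℓ ≤ m - 1)
    (a h : ℂ → ℂ) (U : Set ℂ) (hUb : closedBall (0 : ℂ) 1 ⊆ U)
    (hh : DifferentiableOn ℂ h U)
    (ha : ∀ z : ℂ, a z = (z - ζ₀) ^ m * h z)
    (g : ℂ → ℂ) (c : ℕ → ℂ)
    (hsum : Summable fun k => ‖c k‖ ^ 2)
    (hg : ∀ z ∈ ball (0 : ℂ) 1, g z = ∑' k : ℕ, c k * z ^ k) :
    Tendsto (fun t : ℝ => iteratedDeriv ℓ (fun z => a z * g z) ((t : ℂ) * ζ₀))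
      (nhdsWithin 1 (Set.Iio 1)) (nhds 0) := by
  obtain ⟨M, hM⟩ := (isCompact_closedBall (0 : ℂ) 1).exists_bound_of_continuousOn
    (hh.continuousOn.mono hUb)
  have hM0 : 0 ≤ M := (norm_nonneg _).trans (hM 0 (mem_closedBall_self zero_le_one))
  set S := ∑' k, ‖c k‖ ^ 2
  obtain rfl : a = fun z => (z - ζ₀) ^ m * h z := funext ha
  have hdiff : DifferentiableOn ℂ (fun z => (z - ζ₀) ^ m * h z * g z) (ball 0 1) :=
    (((differentiable_id.sub_const ζ₀).pow m).differentiableOn.mul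
      (hh.mono (ball_subset_closedBall.trans hUb))).mul
      ((differentiableOn_tsum_mul_pow hsum).congr hg)
  have hbound : ∀ z ∈ ball (0 : ℂ) 1,
      ‖(z - ζ₀) ^ m * h z * g z‖ ≤ M * (S + 1) * ‖z - ζ₀‖ ^ m / √(1 - ‖z‖) := by
    intro z hz
    calc ‖(z - ζ₀) ^ m * h z * g z‖ = ‖z - ζ₀‖ ^ m * ‖h z‖ * ‖∑' k, c k * z ^ k‖ := by
          rw [norm_mul, norm_mul, norm_pow, hg z hz]
      _ ≤ ‖z - ζ₀‖ ^ m * M * ((S + 1) / √(1 - ‖z‖)) := by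
          gcongr
          · exact hM z (ball_subset_closedBall hz)
          · exact norm_tsum_mul_pow_le hsum (mem_ball_zero_iff.1 hz)
      _ = M * (S + 1) * ‖z - ζ₀‖ ^ m / √(1 - ‖z‖) := by ring
  have hlim : Tendsto (fun t : ℝ => ℓ.factorial * (M * (S + 1)) * 3 ^ m * √((1 - t) / 2))
      (nhdsWithin 1 (Set.Iio 1)) (nhds 0) :=
    ((by fun_prop : Continuous _).tendsto' 1 0 (by simp)).mono_left nhdsWithin_le_nhds
  refine squeeze_zero_norm' ?_ hlim
  filter_upwards [Ioo_mem_nhdsLT zero_lt_one] with t ht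
  exact norm_iteratedDeriv_le_of_norm_le_mul_pow hζ₀ (by omega) (by positivity) hdiff hbound
    ht.1.le ht.2

theorem stmt_12 (ζ₀ : ℂ) (hζ₀ : ‖ζ₀‖ = 1) (m : ℕ) (hm : 0 < m)
    (ℓ : ℕ) (hℓ : ℓ ≤ m - 1)
    (a h : ℂ → ℂ) (U : Set ℂ) (hU : IsOpen U) (hUb : closedBall (0 : ℂ) 1 ⊆ U)
    (hh : DifferentiableOn ℂ h U)
    (ha : ∀ z : ℂ, a z = (z - ζ₀) ^ m * h z)
    (g : ℂ → ℂ) (c : ℕ → ℂ)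
    (hsum : Summable fun k => ‖c k‖ ^ 2)
    (hg : ∀ z ∈ ball (0 : ℂ) 1, g z = ∑' k : ℕ, c k * z ^ k) :
    Tendsto (fun t : ℝ => iteratedDeriv ℓ (fun z => a z * g z) ((t : ℂ) * ζ₀))
      (nhdsWithin 1 (Set.Iio 1)) (nhds 0) :=
  stmt_12_general ζ₀ hζ₀ m hm ℓ hℓ a h U hUb hh ha g c hsum hg
end

section
/- Fix ζ₀ on the unit circle, an integer ℓ ≥ 0, and a polynomial a with a zero of order exactly m ≥ ℓ + 1 at ζ₀ and no other zeros in the closed unit disk other than points of the unit circle. Let k_{tζ₀,ℓ}(z) = c_ℓ z^ℓ / (1 − t·conj(ζ₀)·z)^{ℓ+1} (the H² reproducing kernel for the ℓ-th derivative at tζ₀, t ∈ [0,1)). Then a·k_{tζ₀,ℓ} converges in H²-norm as t → 1⁻ to the function c · z^ℓ (z − ζ₀)^{m − (ℓ+1)} · a(z)/(z − ζ₀)^m for some nonzero constant c. -/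
/-!
Write `a = (z - ζ₀)^m h` and `q_t(z) = (z - ζ₀) / (1 - t ζ̄₀ z)`. With `c = ℓ! (-ζ₀)^(ℓ+1)`,
`a k_t - c z^ℓ (z - ζ₀)^(m-ℓ-1) h = ℓ! z^ℓ (z - ζ₀)^(m-ℓ-1) h · (q_t^(ℓ+1) - (-ζ₀)^(ℓ+1))`.
On the unit circle `|q_t| ≤ 2` for `0 ≤ t < 1`, and `q_t(z) → -ζ₀` as `t → 1` for every `z ≠ ζ₀`,
because `1 - ζ̄₀ z = -ζ̄₀ (z - ζ₀)`. Dominated convergence then gives convergence in `L²` of the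
circle.
-/

open Polynomial Filter Complex intervalIntegral MeasureTheory Metric Topology ComplexConjugate

lemma one_sub_le_norm_one_sub_mul {t : ℝ} {u : ℂ} (ht : 0 ≤ t) (hu : ‖u‖ ≤ 1) :
    1 - t ≤ ‖1 - t * u‖ := by
  have htu : ‖(t : ℂ) * u‖ ≤ t := by
    rw [norm_mul, norm_real, Real.norm_of_nonneg ht]
    exact mul_le_of_le_one_right ht hu
  have := norm_sub_norm_le (1 : ℂ) (t * u)
  rw [norm_one] at this
  linarith

section Kernel

variable {ζ₀ : ℂ}

lemma conj_mul_self_of_norm_eq_one (hζ₀ : ‖ζ₀‖ = 1) : conj ζ₀ * ζ₀ = 1 := by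
  rw [conj_mul', hζ₀]; norm_num

lemma one_sub_mul_conj_mul_ne_zero (hζ₀ : ‖ζ₀‖ = 1) {t : ℝ} (ht₀ : 0 ≤ t) (ht₁ : t < 1)
    {z : ℂ} (hz : ‖z‖ ≤ 1) : 1 - t * conj ζ₀ * z ≠ 0 := by
  have hu : ‖conj ζ₀ * z‖ ≤ 1 := by simpa [hζ₀] using hz
  have := one_sub_le_norm_one_sub_mul ht₀ hu
  rw [← mul_assoc] at this
  exact norm_pos_iff.mp (by linarith)

/-- `z - ζ₀ = -ζ₀ ((1 - t ζ̄₀ z) - (1 - t) ζ̄₀ z)`, and the second term has norm at most `1 - t`,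
which is itself at most `‖1 - t ζ̄₀ z‖`. -/
lemma norm_sub_le_two_mul_norm_one_sub (hζ₀ : ‖ζ₀‖ = 1) {t : ℝ} (ht₀ : 0 ≤ t) (ht₁ : t ≤ 1)
    {z : ℂ} (hz : ‖z‖ ≤ 1) : ‖z - ζ₀‖ ≤ 2 * ‖1 - t * conj ζ₀ * z‖ := by
  have hu : ‖conj ζ₀ * z‖ ≤ 1 := by simpa [hζ₀] using hz
  have hsplit : z - ζ₀ = -ζ₀ * ((1 - t * conj ζ₀ * z) - ((1 - t : ℝ) : ℂ) * (conj ζ₀ * z)) := by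
    push_cast
    linear_combination (-z) * conj_mul_self_of_norm_eq_one hζ₀
  have hrest : ‖((1 - t : ℝ) : ℂ) * (conj ζ₀ * z)‖ ≤ 1 - t := by
    rw [norm_mul, norm_real, Real.norm_of_nonneg (by linarith)]
    exact mul_le_of_le_one_right (by linarith) hu
  have hden := one_sub_le_norm_one_sub_mul ht₀ hu
  rw [← mul_assoc] at hden
  calc ‖z - ζ₀‖ ≤ ‖1 - t * conj ζ₀ * z‖ + ‖((1 - t : ℝ) : ℂ) * (conj ζ₀ * z)‖ := by
        rw [hsplit, norm_mul, norm_neg, hζ₀, one_mul]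
        exact norm_sub_le _ _
    _ ≤ 2 * ‖1 - t * conj ζ₀ * z‖ := by linarith

lemma norm_sub_div_one_sub_le_two (hζ₀ : ‖ζ₀‖ = 1) {t : ℝ} (ht₀ : 0 ≤ t) (ht₁ : t < 1)
    {z : ℂ} (hz : ‖z‖ ≤ 1) : ‖(z - ζ₀) / (1 - t * conj ζ₀ * z)‖ ≤ 2 := by
  rw [norm_div, div_le_iff₀ (norm_pos_iff.mpr (one_sub_mul_conj_mul_ne_zero hζ₀ ht₀ ht₁ hz))]
  exact norm_sub_le_two_mul_norm_one_sub hζ₀ ht₀ ht₁.le hz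

lemma tendsto_sub_div_one_sub_nhds_one (hζ₀ : ‖ζ₀‖ = 1) {z : ℂ} (hz : z ≠ ζ₀) :
    Tendsto (fun t : ℝ => (z - ζ₀) / (1 - t * conj ζ₀ * z)) (𝓝 1) (𝓝 (-ζ₀)) := by
  have hconj := conj_mul_self_of_norm_eq_one hζ₀
  have hden : 1 - conj ζ₀ * z ≠ 0 := fun h0 =>
    hz (by linear_combination (-ζ₀) * h0 - z * hconj)
  have hlim : (z - ζ₀) / (1 - ((1 : ℝ) : ℂ) * conj ζ₀ * z) = -ζ₀ := by
    rw [ofReal_one, one_mul, div_eq_iff hden]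
    linear_combination (-z) * hconj
  rw [← hlim]
  refine ContinuousAt.tendsto (continuousAt_const.div (by fun_prop) ?_)
  simpa using hden

end Kernel

lemma ae_exp_mul_I_ne (ζ₀ : ℂ) : ∀ᵐ θ : ℝ, exp (θ * I) ≠ ζ₀ := by
  have hnull := ((Set.countable_singleton ζ₀).preimage_circleMap 0 one_ne_zero).measure_zero volume
  simp only [ae_iff, not_not]
  convert hnull using 2
  ext θ
  simp [circleMap]

theorem tendsto_integral_norm_mul_sq_circle {ι : Type*} {l : Filter ι} [l.IsCountablyGenerated]
    {g : ℂ → ℂ} {u : ι → ℂ → ℂ} {B : ℝ} {ζ₀ : ℂ} (hg : ContinuousOn g (sphere 0 1))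
    (hu_cont : ∀ᶠ i in l, ContinuousOn (u i) (sphere 0 1))
    (hu_bound : ∀ᶠ i in l, ∀ z ∈ sphere (0 : ℂ) 1, ‖u i z‖ ≤ B)
    (hu_lim : ∀ z ∈ sphere (0 : ℂ) 1, z ≠ ζ₀ → Tendsto (fun i => u i z) l (𝓝 0)) :
    Tendsto (fun i => ∫ θ in (0 : ℝ)..2 * Real.pi, ‖g (exp (θ * I)) * u i (exp (θ * I))‖ ^ 2)
      l (𝓝 0) := by
  obtain ⟨G, hG⟩ := (isCompact_sphere (0 : ℂ) 1).exists_bound_of_continuousOn hg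
  have hcirc : ∀ θ : ℝ, exp (θ * I) ∈ sphere (0 : ℂ) 1 := fun θ => by
    simp [norm_exp_ofReal_mul_I]
  have hexp : Continuous fun θ : ℝ => exp (θ * I) := by fun_prop
  have hdom := tendsto_integral_filter_of_dominated_convergence (μ := volume) (l := l)
    (a := 0) (b := 2 * Real.pi) (f := fun _ => 0)
    (F := fun i θ => ‖g (exp (θ * I)) * u i (exp (θ * I))‖ ^ 2) (fun _ => (G * B) ^ 2)
    ?_ ?_ intervalIntegrable_const ?_
  · simpa using hdom
  · filter_upwards [hu_cont] with i hi
    exact (((hg.comp_continuous hexp hcirc).mul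
      (hi.comp_continuous hexp hcirc)).norm.pow 2).aestronglyMeasurable
  · filter_upwards [hu_bound] with i hi
    refine ae_of_all _ fun θ _ => ?_
    rw [norm_pow, norm_norm, norm_mul]
    have hG₀ : 0 ≤ G := (norm_nonneg _).trans (hG _ (hcirc 0))
    gcongr
    exacts [hG _ (hcirc θ), hi _ (hcirc θ)]
  · filter_upwards [ae_exp_mul_I_ne ζ₀] with θ hθ _
    simpa using ((hu_lim _ (hcirc θ) hθ).const_mul (g (exp (θ * I)))).norm.pow 2

theorem stmt_13_general (ζ₀ : ℂ) (hζ₀ : ‖ζ₀‖ = 1) (ℓ m : ℕ) (hm : ℓ + 1 ≤ m)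
    (a h : Polynomial ℂ)
    (hfac : a = (X - C ζ₀) ^ m * h)
    (k : ℝ → ℂ → ℂ)
    (hk : ∀ t : ℝ, ∀ z : ℂ, k t z =
      (ℓ.factorial : ℂ) * z ^ ℓ / (1 - (t : ℂ) * (starRingEnd ℂ) ζ₀ * z) ^ (ℓ + 1)) :
    ∃ c : ℂ, c ≠ 0 ∧
      Tendsto (fun t : ℝ =>
          ∫ θ in (0 : ℝ)..(2 * Real.pi),
            ‖a.eval (Complex.exp (θ * Complex.I)) * k t (Complex.exp (θ * Complex.I)) -
              c * (Complex.exp (θ * Complex.I)) ^ ℓ *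
                (Complex.exp (θ * Complex.I) - ζ₀) ^ (m - (ℓ + 1)) *
                h.eval (Complex.exp (θ * Complex.I))‖ ^ 2)
        (nhdsWithin 1 (Set.Iio 1)) (nhds 0) := by
  obtain ⟨n, rfl⟩ : ∃ n, m = n + (ℓ + 1) := ⟨m - (ℓ + 1), by omega⟩
  have hζ₀_ne : ζ₀ ≠ 0 := norm_ne_zero_iff.mp (by simp [hζ₀])
  refine ⟨ℓ.factorial * (-ζ₀) ^ (ℓ + 1), by simp [Nat.factorial_ne_zero, hζ₀_ne], ?_⟩
  have hsplit : ∀ t z, a.eval z * k t z - ℓ.factorial * (-ζ₀) ^ (ℓ + 1) * z ^ ℓ *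
      (z - ζ₀) ^ (n + (ℓ + 1) - (ℓ + 1)) * h.eval z =
      (ℓ.factorial * z ^ ℓ * (z - ζ₀) ^ n * h.eval z) *
        (((z - ζ₀) / (1 - t * conj ζ₀ * z)) ^ (ℓ + 1) - (-ζ₀) ^ (ℓ + 1)) := fun t z => by
    simp only [hfac, hk, eval_mul, eval_pow, eval_sub, eval_X, eval_C, Nat.add_sub_cancel, div_pow]
    ring
  simp only [hsplit]
  have hleft : ∀ᶠ t in 𝓝[<] (1 : ℝ), 0 ≤ t ∧ t < 1 := by
    filter_upwards [Ioo_mem_nhdsLT zero_lt_one] with t ht using ⟨ht.1.le, ht.2⟩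
  refine tendsto_integral_norm_mul_sq_circle (l := 𝓝[<] (1 : ℝ)) (ζ₀ := ζ₀)
    (B := 2 ^ (ℓ + 1) + 1)
    (g := fun z => ℓ.factorial * z ^ ℓ * (z - ζ₀) ^ n * h.eval z)
    (u := fun (t : ℝ) z => ((z - ζ₀) / (1 - t * conj ζ₀ * z)) ^ (ℓ + 1) - (-ζ₀) ^ (ℓ + 1))
    (by fun_prop) ?_ ?_ ?_
  · filter_upwards [hleft] with t ⟨ht₀, ht₁⟩
    refine ContinuousOn.sub (ContinuousOn.pow (ContinuousOn.div (by fun_prop) (by fun_prop)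
      fun z hz => ?_) _) continuousOn_const
    exact one_sub_mul_conj_mul_ne_zero hζ₀ ht₀ ht₁ (mem_sphere_zero_iff_norm.mp hz).le
  · filter_upwards [hleft] with t ⟨ht₀, ht₁⟩ z hz
    have hq := norm_sub_div_one_sub_le_two hζ₀ ht₀ ht₁ (z := z) (mem_sphere_zero_iff_norm.mp hz).le
    calc _ ≤ ‖(z - ζ₀) / (1 - t * conj ζ₀ * z)‖ ^ (ℓ + 1) + ‖(-ζ₀) ^ (ℓ + 1)‖ := by
          rw [← norm_pow]; exact norm_sub_le _ _
      _ ≤ 2 ^ (ℓ + 1) + 1 := by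
          rw [norm_pow, norm_neg, hζ₀, one_pow]; gcongr
  · intro z _ hz
    simpa using ((tendsto_sub_div_one_sub_nhds_one hζ₀ hz).mono_left nhdsWithin_le_nhds).pow (ℓ + 1)
      |>.sub_const ((-ζ₀) ^ (ℓ + 1))

theorem stmt_13 (ζ₀ : ℂ) (hζ₀ : ‖ζ₀‖ = 1) (ℓ m : ℕ) (hm : ℓ + 1 ≤ m)
    (a h : Polynomial ℂ)
    (hfac : a = (X - C ζ₀) ^ m * h) (hh : h.eval ζ₀ ≠ 0)
    (hzeros : ∀ z : ℂ, ‖z‖ ≤ 1 → a.eval z = 0 → ‖z‖ = 1)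
    (k : ℝ → ℂ → ℂ)
    (hk : ∀ t : ℝ, ∀ z : ℂ, k t z =
      (ℓ.factorial : ℂ) * z ^ ℓ / (1 - (t : ℂ) * (starRingEnd ℂ) ζ₀ * z) ^ (ℓ + 1)) :
    ∃ c : ℂ, c ≠ 0 ∧
      Tendsto (fun t : ℝ =>
          ∫ θ in (0 : ℝ)..(2 * Real.pi),
            ‖a.eval (Complex.exp (θ * Complex.I)) * k t (Complex.exp (θ * Complex.I)) -
              c * (Complex.exp (θ * Complex.I)) ^ ℓ *
                (Complex.exp (θ * Complex.I) - ζ₀) ^ (m - (ℓ + 1)) *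
                h.eval (Complex.exp (θ * Complex.I))‖ ^ 2)
        (nhdsWithin 1 (Set.Iio 1)) (nhds 0) :=
  stmt_13_general ζ₀ hζ₀ ℓ m hm a h hfac k hk
end
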